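/- arXiv:math/0409552 — 2 statements merged into one kernel-verified Lean document; each statement's English description precedes it below -/
import Mathlib

section
/- For every z ∈ ℂ and r > 0, (1/2π)∫_0^{2π} log(1/|z - re^{iφ}|) dφ equals -log r if |z| ≤ r, and equals -log|z| if |z| > r. -/
open MeasureTheory intervalIntegral

open Real in
theorem circleAverage_log_norm_sub_const_of_abs_radius_lt {a c : ℂ} {R : ℝ}
    (h : |R| < ‖c - a‖) : circleAverage (log ‖· - a‖) c R = log ‖c - a‖ := by
  rcases eq_or_ne R 0 with rfl | hR
  · simp
  have hca : ‖c - a‖ ≠ 0 := (abs_nonneg R).trans_lt h |>.ne'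
  have hlarge : 1 ≤ |R⁻¹ * ‖c - a‖| := by
    rw [abs_mul, abs_inv, abs_norm]
    exact (one_le_inv_mul₀ (abs_pos.mpr hR)).mpr h.le
  rw [circleAverage_log_norm_sub_const_eq_log_radius_add_posLog hR, posLog_eq_log hlarge,
    log_mul (inv_ne_zero hR) hca, log_inv]
  ring

/-- **The circle average of the logarithmic kernel**: for every `z ∈ ℂ` and `r > 0`,
`(1/2π) ∫₀^{2π} log (1/|z - r e^{iφ}|) dφ` equals `-log r` if `|z| ≤ r` and `-log |z|`
if `|z| > r`. -/
theorem circle_average_log_inv (z : ℂ) (r : ℝ) (hr : 0 < r) :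
    (1 / (2 * Real.pi)) *
        ∫ φ in (0 : ℝ)..(2 * Real.pi),
          Real.log (1 / ‖z - (r : ℂ) * Complex.exp (φ * Complex.I)‖) =
      if ‖z‖ ≤ r then -Real.log r else -Real.log ‖z‖ := by
  have hneg : (1 / (2 * Real.pi)) *
        ∫ φ in (0 : ℝ)..(2 * Real.pi),
          Real.log (1 / ‖z - (r : ℂ) * Complex.exp (φ * Complex.I)‖) =
      -Real.circleAverage (Real.log ‖· - z‖) 0 r := by
    simp [Real.circleAverage_def, circleMap, norm_sub_rev, Real.log_inv]
  rw [hneg]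
  split_ifs with h
  · rw [circleAverage_log_norm_sub_const_of_mem_closedBall (by simpa [abs_of_pos hr] using h)]
  · rw [circleAverage_log_norm_sub_const_of_abs_radius_lt (by simpa [abs_of_pos hr] using h)]
    simp
end

section
/- Let λ > 1 and let m = m(n) satisfy m(n)/n → λ as n → ∞. With C_{[m,n]} := π^n n! ∏_{j=0}^{n-1} [ (m-n+j-1 choose j)^{-1} · 1/(m-n+j) ], one has lim_{n→∞} (1/n²) log C_{[m(n),n]} = B, where B = -λ² log λ / 2 + λ² log(λ-1)/2 - log(λ-1)/2 + (λ-1)/2. -/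
/-!
Writing `m = b + 1 + n`, each factor of the product is `b! j! / (b + j + 1)!`, so the product
telescopes into superfactorials: `C_{[m,n]} = π^n (b!)^n sf(n) sf(b) / sf(b + n)`.
Stirling's formula gives `log N! = N log N - N + o(N)`; summing it, and comparing `∑ k log k` with
a primitive of `x log x`, gives `log sf(N) = N²/2 · log N - 3N²/4 + o(N²)`.
For `b ~ (λ - 1) n` the `log n` terms of the four contributions cancel exactly, and what is left
depends continuously on `b / n`, with limit `B`.
-/

open Filter Topology

noncomputable section

/-- The normalizing constant `C_{[m,n]}` of the joint eigenvalue density of the `n × n`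
truncation of an `m × m` Haar unitary matrix. -/
def Cconst (m n : ℕ) : ℝ :=
  Real.pi ^ n * (n.factorial : ℝ) *
    ∏ j ∈ Finset.range n, ((((m - n + j - 1).choose j : ℕ) : ℝ)⁻¹ * ((m - n + j : ℕ) : ℝ)⁻¹)

def Bconst (l : ℝ) : ℝ :=
  -(l ^ 2 * Real.log l) / 2 + l ^ 2 * Real.log (l - 1) / 2 - Real.log (l - 1) / 2
    + (l - 1) / 2

open Asymptotics Finset Real
open scoped Nat

theorem Nat.superFactorial_pos (n : ℕ) : 0 < n.superFactorial := by
  rw [← Nat.prod_range_factorial_succ]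
  exact prod_pos fun k _ => k.succ.factorial_pos

theorem Cconst_add_eq (b n : ℕ) :
    Cconst (b + 1 + n) n
      = π ^ n * (b ! : ℝ) ^ n * n.superFactorial * b.superFactorial / (b + n).superFactorial := by
  have hfactor (j : ℕ) : ((((b + 1 + n - n + j - 1).choose j : ℕ) : ℝ)⁻¹
      * ((b + 1 + n - n + j : ℕ) : ℝ)⁻¹) = b ! * j ! / (b + j + 1)! := by
    rw [show b + 1 + n - n + j - 1 = b + j by omega, show b + 1 + n - n + j = b + j + 1 by omega,
      Nat.factorial_succ, ← Nat.add_choose_mul_factorial_mul_factorial b j]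
    push_cast
    field_simp
  have hsf_n : (n ! : ℝ) * ∏ j ∈ range n, (j ! : ℝ) = n.superFactorial := by
    rw [← Nat.prod_range_succ_factorial, Nat.cast_prod, prod_range_succ, mul_comm]
  have hsf_add : (b.superFactorial : ℝ) * ∏ j ∈ range n, ((b + j + 1)! : ℝ)
      = (b + n).superFactorial := by
    rw [← Nat.prod_range_factorial_succ, ← Nat.prod_range_factorial_succ, prod_range_add]
    push_cast
    ring
  have hpos : (0 : ℝ) < ∏ j ∈ range n, ((b + j + 1)! : ℝ) := prod_pos fun _ _ => by positivity
  have hsf_pos : (0 : ℝ) < b.superFactorial := by exact_mod_cast b.superFactorial_pos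
  rw [Cconst, prod_congr rfl fun j _ => hfactor j, prod_div_distrib, prod_mul_distrib, prod_const,
    card_range, ← hsf_n, ← hsf_add]
  field_simp

theorem log_Cconst_add_div_sq (b n : ℕ) :
    ((n : ℝ) ^ 2)⁻¹ * log (Cconst (b + 1 + n) n)
      = log π / n + (log (b ! : ℝ) - b * log n) / n
        + (log (n.superFactorial : ℝ) - (n : ℝ) ^ 2 / 2 * log n) / (n : ℝ) ^ 2
        + (log (b.superFactorial : ℝ) - (b : ℝ) ^ 2 / 2 * log n) / (n : ℝ) ^ 2
        - (log ((b + n).superFactorial : ℝ) - ((b + n : ℕ) : ℝ) ^ 2 / 2 * log n)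
          / (n : ℝ) ^ 2 := by
  rcases n.eq_zero_or_pos with rfl | hn
  · simp
  have hsf (N : ℕ) : (N.superFactorial : ℝ) ≠ 0 := by exact_mod_cast N.superFactorial_pos.ne'
  rw [Cconst_add_eq, log_div, log_mul, log_mul, log_mul, log_pow, log_pow]
  · field_simp
    push_cast
    ring
  all_goals simp [hsf, pi_ne_zero, Nat.factorial_ne_zero]

theorem log_factorial_sub_isLittleO :
    (fun N : ℕ => log N ! - (N * log N - N)) =o[atTop] fun N => (N : ℝ) := by
  have hseq : (fun N : ℕ => log (Stirling.stirlingSeq N)) =o[atTop] fun N => (N : ℝ) :=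
    (Stirling.tendsto_stirlingSeq_sqrt_pi.log (by positivity)).isBigO_one ℝ |>.trans_isLittleO <|
      (isLittleO_one_left_iff ℝ).2 (tendsto_norm_atTop_atTop.comp tendsto_natCast_atTop_atTop)
  have hlog : (fun N : ℕ => log (2 * N)) =o[atTop] fun N => (N : ℝ) := by
    have h := isLittleO_log_id_atTop.comp_tendsto
      (tendsto_natCast_atTop_atTop.const_mul_atTop (zero_lt_two' ℝ))
    exact h.trans_isBigO ((isBigO_refl _ _).const_mul_left 2)
  refine (hseq.add (hlog.const_mul_left (1 / 2))).congr_left fun N => ?_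
  rw [Stirling.log_stirlingSeq_formula]
  rcases N.eq_zero_or_pos with rfl | hN
  · simp
  · rw [log_div (by positivity) (exp_ne_zero 1), log_exp]
    ring

/-- A primitive of `x log x`, shifted by `x / 4` so that its increment over `[k, k + 1]` lies
between `k log k` and `(k + 1) log (k + 1)` already for `k = 0`. -/
def mulLogSumApprox (x : ℝ) : ℝ := x ^ 2 / 2 * log x - x ^ 2 / 4 + x / 4

theorem mulLogSumApprox_succ_sub_bounds (k : ℕ) :
    k * log k ≤ mulLogSumApprox (k + 1) - mulLogSumApprox k ∧
      mulLogSumApprox (k + 1) - mulLogSumApprox k ≤ (k + 1) * log (k + 1) := by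
  rcases k.eq_zero_or_pos with rfl | hk
  · norm_num [mulLogSumApprox]
  have hk1 : (1 : ℝ) ≤ k := by exact_mod_cast hk
  have hk0 : (0 : ℝ) < k := by linarith
  have hquot : log ((k + 1) / k) = log (k + 1) - log k := log_div (by positivity) hk0.ne'
  have hlow := one_sub_inv_le_log_of_pos (show (0 : ℝ) < (k + 1) / k by positivity)
  have hupp := log_le_sub_one_of_pos (show (0 : ℝ) < (k + 1) / k by positivity)
  rw [hquot, inv_div, one_sub_div (by positivity), add_sub_cancel_left] at hlow
  rw [hquot, div_sub_one hk0.ne', add_sub_cancel_left] at hupp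
  have hlow' : 1 ≤ (k + 1) * (log (k + 1) - log k) := by
    rwa [div_le_iff₀' (by positivity)] at hlow
  have hupp' : k * (log (k + 1) - log k) ≤ 1 := by
    rwa [le_div_iff₀' hk0] at hupp
  have hlogk : 0 ≤ log k := log_nonneg hk1
  unfold mulLogSumApprox
  constructor <;> nlinarith

theorem sum_range_mulLogSumApprox_succ_sub (N : ℕ) :
    ∑ k ∈ range N, (mulLogSumApprox ((k : ℝ) + 1) - mulLogSumApprox k) = mulLogSumApprox N := by
  have h := sum_range_sub (fun k : ℕ => mulLogSumApprox k) N
  push_cast at h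
  rw [h, sub_eq_self]
  simp [mulLogSumApprox]

theorem sum_range_mul_log_le (N : ℕ) : ∑ k ∈ range N, (k : ℝ) * log k ≤ mulLogSumApprox N :=
  sum_range_mulLogSumApprox_succ_sub N ▸
    sum_le_sum fun k _ => (mulLogSumApprox_succ_sub_bounds k).1

theorem le_sum_range_succ_mul_log (N : ℕ) :
    mulLogSumApprox N ≤ ∑ k ∈ range N, ((k : ℝ) + 1) * log ((k : ℝ) + 1) :=
  sum_range_mulLogSumApprox_succ_sub N ▸
    sum_le_sum fun k _ => (mulLogSumApprox_succ_sub_bounds k).2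

theorem natCast_mul_log_isLittleO_sq :
    (fun N : ℕ => (N : ℝ) * log N) =o[atTop] fun N => (N : ℝ) ^ 2 := by
  simpa only [sq, Function.comp_def, id] using
    (isBigO_refl (fun N : ℕ => (N : ℝ)) atTop).mul_isLittleO
      (isLittleO_log_id_atTop.comp_tendsto tendsto_natCast_atTop_atTop)

theorem sum_range_succ_mul_log_sub_isLittleO :
    (fun N : ℕ => ∑ k ∈ range N, ((k : ℝ) + 1) * log ((k : ℝ) + 1) - mulLogSumApprox N)
      =o[atTop] fun N => (N : ℝ) ^ 2 := by
  refine IsBigO.trans_isLittleO (IsBigO.of_bound 1 (Eventually.of_forall fun N => ?_))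
    natCast_mul_log_isLittleO_sq
  have hshift : ∑ k ∈ range N, ((k : ℝ) + 1) * log ((k : ℝ) + 1)
      = ∑ k ∈ range N, (k : ℝ) * log k + N * log N := by
    have := sum_range_succ' (fun k : ℕ => (k : ℝ) * log k) N
    rw [sum_range_succ] at this
    push_cast at this
    simpa using this.symm
  have hupper := sum_range_mul_log_le N
  have hlower := le_sum_range_succ_mul_log N
  have hNlog : 0 ≤ (N : ℝ) * log N := mul_nonneg N.cast_nonneg (log_natCast_nonneg N)
  rw [one_mul, Real.norm_of_nonneg (by linarith), Real.norm_of_nonneg hNlog]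
  linarith

theorem sum_range_natCast_add_one (N : ℕ) : ∑ k ∈ range N, ((k : ℝ) + 1) = N * (N + 1) / 2 := by
  induction N with
  | zero => simp
  | succ N ih => rw [sum_range_succ, ih]; push_cast; ring

theorem log_superFactorial_sub_isLittleO :
    (fun N : ℕ => log (N.superFactorial : ℝ) - (N ^ 2 / 2 * log N - 3 * N ^ 2 / 4))
      =o[atTop] fun N => (N : ℝ) ^ 2 := by
  have hlog_sf (N : ℕ) : log (N.superFactorial : ℝ) = ∑ k ∈ range N, log ((k + 1)! : ℝ) := by
    rw [← Nat.prod_range_factorial_succ, Nat.cast_prod,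
      log_prod fun k _ => by positivity]
  have hfact : (fun k : ℕ => log ((k + 1)! : ℝ) - ((k + 1) * log (k + 1) - (k + 1)))
      =o[atTop] fun k : ℕ => (k : ℝ) + 1 := by
    simpa [Function.comp_def] using
      log_factorial_sub_isLittleO.comp_tendsto (tendsto_add_atTop_nat 1)
  have hsum_fact := hfact.sum_range (fun k => by positivity) <| by
    refine tendsto_atTop_mono (fun N => ?_) tendsto_natCast_atTop_atTop
    rw [sum_range_natCast_add_one]
    rcases N with _ | N
    · simp
    · push_cast; nlinarith [N.cast_nonneg (α := ℝ)]
  have hsum_sq : (fun N : ℕ => ∑ k ∈ range N, ((k : ℝ) + 1)) =O[atTop] fun N => (N : ℝ) ^ 2 := by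
    refine IsBigO.of_bound 1 (Eventually.of_forall fun N => ?_)
    rw [sum_range_natCast_add_one, Real.norm_of_nonneg (by positivity),
      Real.norm_of_nonneg (by positivity)]
    rcases N with _ | N
    · simp
    · push_cast; nlinarith [N.cast_nonneg (α := ℝ)]
  have hlin : (fun N : ℕ => (N : ℝ) / 4) =o[atTop] fun N => (N : ℝ) ^ 2 := by
    simpa [div_eq_mul_inv, mul_comm, Function.comp_def] using
      ((isLittleO_pow_pow_atTop_of_lt one_lt_two).comp_tendsto
        tendsto_natCast_atTop_atTop).const_mul_left (1 / 4 : ℝ)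
  refine (((hsum_fact.trans_isBigO hsum_sq).add sum_range_succ_mul_log_sub_isLittleO).sub
    hlin).congr_left fun N => ?_
  rw [hlog_sf, sum_sub_distrib, sum_sub_distrib, sum_range_natCast_add_one]
  unfold mulLogSumApprox
  ring

section Scaling

variable {b : ℕ → ℕ} {β : ℝ}

theorem tendsto_atTop_of_div_tendsto (hβ : 0 < β)
    (hb : Tendsto (fun n => (b n : ℝ) / n) atTop (𝓝 β)) : Tendsto b atTop atTop := by
  refine tendsto_natCast_atTop_iff.1 <|
    (hb.pos_mul_atTop hβ tendsto_natCast_atTop_atTop).congr' ?_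
  filter_upwards [eventually_ne_atTop 0] with n hn
  exact div_mul_cancel₀ _ (Nat.cast_ne_zero.2 hn)

theorem tendsto_div_pow_of_isLittleO {f : ℕ → ℝ} {k : ℕ} (hf : f =o[atTop] fun N => (N : ℝ) ^ k)
    (hβ : 0 < β) (hb : Tendsto (fun n => (b n : ℝ) / n) atTop (𝓝 β)) :
    Tendsto (fun n => f (b n) / (n : ℝ) ^ k) atTop (𝓝 0) := by
  have hbig : (fun n => (b n : ℝ)) =O[atTop] fun n => (n : ℝ) :=
    isBigO_of_div_tendsto_nhds ((eventually_ne_atTop 0).mono fun n hn h =>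
      absurd h (Nat.cast_ne_zero.2 hn)) β hb
  exact ((hf.comp_tendsto (tendsto_atTop_of_div_tendsto hβ hb)).trans_isBigO
    (hbig.pow k)).tendsto_div_nhds_zero

theorem tendsto_pow_mul_log_sub_div (k : ℕ) (hβ : 0 < β)
    (hb : Tendsto (fun n => (b n : ℝ) / n) atTop (𝓝 β)) :
    Tendsto (fun n => ((b n : ℝ) ^ k * log (b n) - (b n) ^ k * log n) / (n : ℝ) ^ k) atTop
      (𝓝 (β ^ k * log β)) := by
  refine ((hb.pow k).mul (hb.log hβ.ne')).congr' ?_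
  filter_upwards [eventually_ne_atTop 0, (tendsto_atTop_of_div_tendsto hβ hb).eventually_ne_atTop 0]
    with n hn hbn
  rw [log_div (Nat.cast_ne_zero.2 hbn) (Nat.cast_ne_zero.2 hn), div_pow]
  ring

theorem tendsto_log_factorial_sub_div (hβ : 0 < β)
    (hb : Tendsto (fun n => (b n : ℝ) / n) atTop (𝓝 β)) :
    Tendsto (fun n => (log (b n)! - b n * log n) / n) atTop (𝓝 (β * log β - β)) := by
  have herr := tendsto_div_pow_of_isLittleO (k := 1)
    (log_factorial_sub_isLittleO.congr_right fun N => (pow_one _).symm) hβ hb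
  have hmain := tendsto_pow_mul_log_sub_div 1 hβ hb
  simp only [pow_one] at herr hmain
  simpa using (herr.add hmain).sub hb |>.congr fun n => by ring

theorem tendsto_log_superFactorial_sub_div (hβ : 0 < β)
    (hb : Tendsto (fun n => (b n : ℝ) / n) atTop (𝓝 β)) :
    Tendsto (fun n => (log ((b n).superFactorial : ℝ) - (b n : ℝ) ^ 2 / 2 * log n) / (n : ℝ) ^ 2)
      atTop (𝓝 (β ^ 2 / 2 * log β - 3 * β ^ 2 / 4)) := by
  have herr := tendsto_div_pow_of_isLittleO log_superFactorial_sub_isLittleO hβ hb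
  have hmain := tendsto_pow_mul_log_sub_div 2 hβ hb
  have hsq : Tendsto (fun n => (b n : ℝ) ^ 2 / (n : ℝ) ^ 2) atTop (𝓝 (β ^ 2)) := by
    simpa only [div_pow] using hb.pow 2
  convert (herr.add (hmain.div_const 2)).sub (hsq.const_mul (3 / 4)) using 1
  · funext n
    ring
  · congr 1
    ring

end Scaling

/-- **The asymptotics of the normalizing constant**: if `m n / n → λ > 1`, then
`(1/n²) log C_{[m n, n]} → B`. -/
theorem normalizing_constant_limit (lam : ℝ) (hlam : 1 < lam)
    (m : ℕ → ℕ) (hm : Tendsto (fun n => (m n : ℝ) / n) atTop (𝓝 lam)) :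
    Tendsto (fun n : ℕ => ((n : ℝ) ^ 2)⁻¹ * Real.log (Cconst (m n) n)) atTop
      (𝓝 (Bconst lam)) := by
  have hμ : 0 < lam - 1 := sub_pos.2 hlam
  have hgt : ∀ᶠ n in atTop, n + 1 ≤ m n := by
    filter_upwards [hm.eventually (lt_mem_nhds hlam), eventually_ne_atTop 0] with n h hn
    have : (n : ℝ) < m n := by rwa [one_lt_div (by positivity)] at h
    exact_mod_cast this
  set b : ℕ → ℕ := fun n => m n - n - 1 with hb_def
  have hb : Tendsto (fun n => (b n : ℝ) / n) atTop (𝓝 (lam - 1)) := by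
    refine (sub_zero (lam - 1) ▸ (hm.sub_const 1).sub tendsto_one_div_atTop_nhds_zero_nat).congr' ?_
    filter_upwards [hgt, eventually_ne_atTop 0] with n h hn
    simp only [hb_def, Nat.sub_sub]
    rw [Nat.cast_sub h]
    field_simp
    push_cast
    ring
  have hone : Tendsto (fun n : ℕ => (n : ℝ) / n) atTop (𝓝 1) :=
    tendsto_const_nhds.congr' <| (eventually_ne_atTop 0).mono fun n hn =>
      (div_self (Nat.cast_ne_zero.2 hn)).symm
  have hbn : Tendsto (fun n => ((b n + n : ℕ) : ℝ) / n) atTop (𝓝 lam) := by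
    simpa [add_div] using hb.add hone
  have hlim := ((((tendsto_const_div_atTop_nhds_zero_nat (log π)).add
    (tendsto_log_factorial_sub_div hμ hb)).add
    (tendsto_log_superFactorial_sub_div (b := id) one_pos hone)).add
    (tendsto_log_superFactorial_sub_div hμ hb)).sub
    (tendsto_log_superFactorial_sub_div (zero_lt_one.trans hlam) hbn)
  convert hlim.congr' (f₂ := fun n : ℕ => ((n : ℝ) ^ 2)⁻¹ * log (Cconst (m n) n)) ?_ using 2
  · rw [Bconst, log_one]
    ring
  · filter_upwards [hgt] with n hn
    rw [← show m n - n - 1 + 1 + n = m n by omega, log_Cconst_add_div_sq]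
    rfl
end
end
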